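/- Let (W,S) be a Coxeter system, W₁ a standard parabolic subgroup, σ, w ∈ W, and set J_{σW₁}(w) = { v ∈ σW₁ : w ≤ v }. Suppose that σ is the unique minimal element of the coset σW₁, and let s ∈ S be such that sσ < σ. Then: (1) sx < x for every x ∈ J_{σW₁}(w), and v < sv for every v ∈ J_{sσW₁}(w ∧ sw); (2) J_{σW₁}(w) = s·J_{sσW₁}(w ∧ sw); in particular J_{σW₁}(w) = J_{σW₁}(w ∧ sw) = J_{σW₁}(w ∨ sw); (3) if either J_{σW₁}(w) or J_{sσW₁}(w ∧ sw) has a unique minimal element u in the Bruhat order, then so does the other, and that unique minimal element is su. -/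

import Mathlib

variable {B W : Type*} [Group W] {M : CoxeterMatrix B}

/-- The (strong) Bruhat order on the Coxeter group `W`: `u ≤ v` if and only if some
reduced word for `v` admits a sublist whose product is `u`. -/
def BruhatLE (cs : CoxeterSystem M W) (u v : W) : Prop :=
  ∃ ω : List B, cs.IsReduced ω ∧ cs.wordProd ω = v ∧
    ∃ ω' : List B, ω'.Sublist ω ∧ cs.wordProd ω' = u

/-- The strict Bruhat order. -/
def BruhatLT (cs : CoxeterSystem M W) (u v : W) : Prop :=
  BruhatLE cs u v ∧ u ≠ v

/-- `m` is the unique minimal element of `K` in the Bruhat order, i.e. `m ∈ K` and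
`m` is Bruhat-below every element of `K`. -/
def IsBrMin (cs : CoxeterSystem M W) (K : Set W) (m : W) : Prop :=
  m ∈ K ∧ ∀ x ∈ K, BruhatLE cs m x

/-- `m` is the unique maximal element of `K` in the Bruhat order, i.e. `m ∈ K` and
`m` is Bruhat-above every element of `K`. -/
def IsBrMax (cs : CoxeterSystem M W) (K : Set W) (m : W) : Prop :=
  m ∈ K ∧ ∀ x ∈ K, BruhatLE cs x m

/-- A standard parabolic subgroup: a subgroup generated by a subset of the simple
reflections. -/
def IsStdParabolic (cs : CoxeterSystem M W) (P : Subgroup W) : Prop :=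
  ∃ X : Set B, P = Subgroup.closure (cs.simple '' X)

/-- The left coset `u•W₁ = {u * b : b ∈ W₁}`. -/
def lCoset (W₁ : Subgroup W) (u : W) : Set W := {x | ∃ b ∈ W₁, x = u * b}

/-- The double coset `W₁ u W₂ = {a * u * b : a ∈ W₁, b ∈ W₂}`. -/
def dblCoset (W₁ W₂ : Subgroup W) (u : W) : Set W :=
  {x | ∃ a ∈ W₁, ∃ b ∈ W₂, x = a * u * b}

/-- `J_{σW₁}(w) = { v ∈ σW₁ : w ≤ v }`. -/
def Jset (cs : CoxeterSystem M W) (W₁ : Subgroup W) (σ w : W) : Set W :=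
  {v | v ∈ lCoset W₁ σ ∧ BruhatLE cs w v}

/-!
Tits' representation of `W` on `W × ZMod 2` shows that the parity of the number of occurrences of
a reflection in the left inversion sequence of a word depends only on the product of the word.
This gives the strong exchange and deletion properties, and the cocycle rule for these parities
shows that lengths add, `ℓ (σ b) = ℓ σ + ℓ b`, on a coset `σ W₁` of minimal length `σ`. Comparing
subwords with chains of reflections shows that `u ≤ v` has a subword in every reduced word for
`v`, which yields the lifting property: if `s x < x` then `u ≤ x ↔ s u ≤ x`, and `u ≤ x` implies
`u ≤ s x` or `s u ≤ s x`.

Since `s σ < σ`, additivity makes `s` a left descent of every element of `σ W₁`. Left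
multiplication by `s` then maps `J_{sσW₁}(w ∧ sw)` onto `J_{σW₁}(w)`, and by lifting it is an
order isomorphism from elements without left descent `s` to elements with it, so it matches their
minimal elements.
-/

theorem zmod_two_eq_zero_or_eq_one : ∀ a : ZMod 2, a = 0 ∨ a = 1 := by decide

namespace CoxeterSystem

variable (cs : CoxeterSystem M W)

local prefix:100 "s" => cs.simple
local prefix:100 "π" => cs.wordProd
local prefix:100 "ℓ" => cs.length
local prefix:100 "lis" => cs.leftInvSeq

theorem prod_map_alternatingWord_two_mul {G : Type*} [Monoid G] (f : B → G) (i j : B)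
    (p : ℕ) : ((alternatingWord i j (2 * p)).map f).prod = (f i * f j) ^ p := by
  induction p with
  | zero => simp [alternatingWord]
  | succ p ih =>
    rw [show 2 * (p + 1) = 2 * p + 1 + 1 by ring, alternatingWord_succ', alternatingWord_succ']
    simp [ih, pow_succ', mul_assoc]

theorem wordProd_alternatingWord_two_mul_eq_one (i j : B) :
    π (alternatingWord i j (2 * M i j)) = 1 := by
  simp [prod_alternatingWord_eq_mul_pow, simple_mul_simple_pow]

-- Every reflection thus occurs an even number of times: the braid relation for `reflectionPerm`.
theorem leftInvSeq_alternatingWord_eq_append (i j : B) :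
    lis (alternatingWord i j (2 * M i j)) =
      (lis (alternatingWord i j (2 * M i j))).take (M i j) ++
        (lis (alternatingWord i j (2 * M i j))).take (M i j) := by
  set l := lis (alternatingWord i j (2 * M i j))
  have hl : l.length = 2 * M i j := by simp [l]
  suffices l.drop (M i j) = l.take (M i j) by
    conv_lhs => rw [← List.take_append_drop (M i j) l, this]
  refine List.ext_getElem (by simp [hl]; omega) fun k _ hk => ?_
  replace hk : k < M i j := by simp only [List.length_take, hl] at hk; omega
  rw [List.getElem_drop, List.getElem_take, getElem_leftInvSeq_alternatingWord,
    getElem_leftInvSeq_alternatingWord, prod_alternatingWord_eq_mul_pow,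
    prod_alternatingWord_eq_mul_pow, if_neg (Nat.not_even_two_mul_add_one _),
    if_neg (Nat.not_even_two_mul_add_one _), show (2 * (M i j + k) + 1) / 2 = M i j + k by omega,
    show (2 * k + 1) / 2 = k by omega, pow_add, M.symmetric, simple_mul_simple_pow, one_mul]
  all_goals omega

open scoped Classical in
noncomputable def reflectionPerm (i : B) : Equiv.Perm (W × ZMod 2) :=
  Function.Involutive.toPerm (fun p => (s i * p.1 * s i, p.2 + if p.1 = s i then 1 else 0))
    (by
      rintro ⟨t, ε⟩
      have hconj : s i * t * s i = s i ↔ t = s i := by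
        constructor <;> intro h
        · simpa [mul_assoc] using congrArg (fun x => s i * x * s i) h
        · simp [h]
      ext
      · simp [mul_assoc]
      · by_cases h : t = s i <;> simp [hconj, h, add_assoc, CharTwo.add_self_eq_zero])

open scoped Classical in
@[simp]
theorem reflectionPerm_apply (i : B) (t : W) (ε : ZMod 2) :
    cs.reflectionPerm i (t, ε) = (s i * t * s i, ε + if t = s i then 1 else 0) :=
  rfl

open scoped Classical in
theorem prod_map_reflectionPerm_apply (ω : List B) (t : W) (ε : ZMod 2) :
    (ω.map cs.reflectionPerm).prod (t, ε) =
      (π ω * t * (π ω)⁻¹, ε + (lis ω).count (π ω * t * (π ω)⁻¹)) := by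
  induction ω with
  | nil => simp
  | cons i ω ih =>
    set x := π ω * t * (π ω)⁻¹
    have hconj : π (i :: ω) * t * (π (i :: ω))⁻¹ = MulAut.conj (s i) x := by
      simp [x, wordProd_cons, mul_assoc]
    have hfix : s i = MulAut.conj (s i) x ↔ x = s i := by
      rw [eq_comm, ← (MulAut.conj (s i)).injective.eq_iff, MulAut.conj_apply, MulAut.conj_apply]
      simp [mul_assoc]
    rw [List.map_cons, List.prod_cons, Equiv.Perm.mul_apply, ih, hconj, leftInvSeq,
      List.count_cons, List.count_map_of_injective _ _ (MulAut.conj (s i)).injective,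
      reflectionPerm_apply]
    simp only [beq_iff_eq, hfix]
    simp only [MulAut.conj_apply, inv_simple, Nat.cast_add, add_assoc]
    split_ifs <;> simp

theorem isLiftable_reflectionPerm : M.IsLiftable cs.reflectionPerm := by
  classical
  intro i j
  ext ⟨t, ε⟩ : 1
  rw [← prod_map_alternatingWord_two_mul, prod_map_reflectionPerm_apply,
    wordProd_alternatingWord_two_mul_eq_one, leftInvSeq_alternatingWord_eq_append,
    List.count_append]
  simp [CharTwo.add_self_eq_zero]

noncomputable def titsRep : W →* Equiv.Perm (W × ZMod 2) :=
  cs.lift ⟨cs.reflectionPerm, cs.isLiftable_reflectionPerm⟩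

/-- The parity of the number of occurrences of `w t w⁻¹` in the left inversion sequence of any
word for `w` (`inversionParity_wordProd`); it is `1` exactly when `t` is a right inversion
of `w`. -/
noncomputable def inversionParity (w t : W) : ZMod 2 := (cs.titsRep w (t, 0)).2

theorem titsRep_wordProd (ω : List B) : cs.titsRep (π ω) = (ω.map cs.reflectionPerm).prod := by
  rw [wordProd, map_list_prod, List.map_map]
  congr 2
  funext i
  exact cs.lift_apply_simple cs.isLiftable_reflectionPerm i

open scoped Classical in
theorem inversionParity_wordProd (ω : List B) (t : W) :
    cs.inversionParity (π ω) t = (lis ω).count (π ω * t * (π ω)⁻¹) := by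
  simp [inversionParity, titsRep_wordProd, prod_map_reflectionPerm_apply]

theorem titsRep_apply (w t : W) (ε : ZMod 2) :
    cs.titsRep w (t, ε) = (w * t * w⁻¹, ε + cs.inversionParity w t) := by
  obtain ⟨ω, rfl⟩ := cs.wordProd_surjective w
  simp [inversionParity, titsRep_wordProd, prod_map_reflectionPerm_apply]

theorem inversionParity_mul (x y t : W) :
    cs.inversionParity (x * y) t = cs.inversionParity y t + cs.inversionParity x (y * t * y⁻¹) := by
  have := cs.titsRep_apply (x * y) t 0
  rw [map_mul, Equiv.Perm.mul_apply, titsRep_apply, titsRep_apply] at this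
  simpa using (congrArg Prod.snd this).symm

theorem inversionParity_simple (i : B) : cs.inversionParity (s i) (s i) = 1 := by
  simp [inversionParity, titsRep, lift_apply_simple]

theorem inversionParity_one (t : W) : cs.inversionParity 1 t = 0 := by
  simp [inversionParity]

theorem IsReflection.inversionParity_self {t : W} (ht : cs.IsReflection t) :
    cs.inversionParity t t = 1 := by
  obtain ⟨q, i, rfl⟩ := ht
  have h₁ : q⁻¹ * (q * s i * q⁻¹) * q⁻¹⁻¹ = s i := by group
  have h₂ : s i * s i * (s i)⁻¹ = s i := by group
  have hq := cs.inversionParity_mul q q⁻¹ (q * s i * q⁻¹)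
  rw [mul_inv_cancel, h₁, inversionParity_one] at hq
  rw [inversionParity_mul, h₁, inversionParity_mul, h₂, inversionParity_simple]
  linear_combination hq.symm

theorem isRightInversion_of_inversionParity_eq_one {w t : W} (ht : cs.IsReflection t)
    (h : cs.inversionParity w t = 1) : cs.IsRightInversion w t := by
  classical
  obtain ⟨ω, hω, rfl⟩ := cs.exists_isReduced w
  rw [inversionParity_wordProd] at h
  have hmem : π ω * t * (π ω)⁻¹ ∈ lis ω := by
    refine List.count_pos_iff.mp (Nat.pos_of_ne_zero fun h₀ => ?_)
    simp [h₀] at h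
  refine ⟨ht, ?_⟩
  simpa using (cs.isLeftInversion_of_mem_leftInvSeq hω hmem).2

theorem IsReflection.isRightInversion_iff {w t : W} (ht : cs.IsReflection t) :
    cs.IsRightInversion w t ↔ cs.inversionParity w t = 1 := by
  refine ⟨fun h => ?_, cs.isRightInversion_of_inversionParity_eq_one ht⟩
  refine (zmod_two_eq_zero_or_eq_one _).resolve_left fun h₀ => ?_
  have : cs.inversionParity (w * t) t = 1 := by
    rw [inversionParity_mul, ht.inversionParity_self, mul_inv_cancel_right, h₀, add_zero]
  exact ht.isRightInversion_mul_left_iff.mp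
    (cs.isRightInversion_of_inversionParity_eq_one ht this) h

/-- The strong exchange property, for words that need not be reduced. -/
theorem mem_leftInvSeq_of_isLeftInversion {ω : List B} {t : W}
    (h : cs.IsLeftInversion (π ω) t) : t ∈ lis ω := by
  classical
  set w := π ω
  have ht : cs.IsReflection (w⁻¹ * t * w) := by simpa using h.1.conj w⁻¹
  have hright : cs.IsRightInversion w (w⁻¹ * t * w) := ⟨ht, by simpa [mul_assoc] using h.2⟩
  rw [ht.isRightInversion_iff, inversionParity_wordProd] at hright
  have hcount : (lis ω).count t ≠ 0 := fun h₀ => by simp [w, mul_assoc, h₀] at hright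
  exact List.count_pos_iff.mp (Nat.pos_of_ne_zero hcount)

theorem exists_eraseIdx_eq_mul_of_isLeftInversion {ω : List B} {t : W}
    (h : cs.IsLeftInversion (π ω) t) : ∃ j < ω.length, π (ω.eraseIdx j) = t * π ω := by
  obtain ⟨j, hj, rfl⟩ := List.getElem_of_mem (cs.mem_leftInvSeq_of_isLeftInversion h)
  refine ⟨j, by simpa using hj, ?_⟩
  rw [← getD_leftInvSeq_mul_wordProd, List.getD_eq_getElem]

theorem exists_isReduced_sublist (ω : List B) :
    ∃ κ, κ.Sublist ω ∧ cs.IsReduced κ ∧ π κ = π ω := by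
  induction ω with
  | nil => exact ⟨[], List.Sublist.slnil, by simp [IsReduced], rfl⟩
  | cons i ω ih =>
    obtain ⟨κ, hκω, hκ, hπ⟩ := ih
    rcases cs.length_simple_mul (π κ) i with hlen | hlen
    · refine ⟨i :: κ, hκω.cons_cons i, ?_, by simp [wordProd_cons, hπ]⟩
      simp [IsReduced, wordProd_cons, hlen, hκ.eq]
    · obtain ⟨j, hj, hj'⟩ := cs.exists_eraseIdx_eq_mul_of_isLeftInversion
        (ω := κ) ⟨cs.isReflection_simple i, by omega⟩
      refine ⟨κ.eraseIdx j, ((κ.eraseIdx_sublist j).trans hκω).cons i, ?_, ?_⟩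
      · rw [IsReduced, hj', List.length_eraseIdx_of_lt hj]
        have := hκ.eq
        omega
      · rw [hj', hπ, wordProd_cons]

theorem isRightInversion_mul {x y t : W} (h : cs.IsRightInversion (x * y) t) :
    cs.IsRightInversion y t ∨ cs.IsRightInversion x (y * t * y⁻¹) := by
  have ht := h.1
  rw [ht.isRightInversion_iff, inversionParity_mul] at h
  rw [ht.isRightInversion_iff, (ht.conj y).isRightInversion_iff]
  rcases zmod_two_eq_zero_or_eq_one (cs.inversionParity y t) with h₀ | h₁
  · right; simpa [h₀] using h
  · left; exact h₁

theorem length_mul_eq_add_of_forall_length_le {X : Set B} {σ : W}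
    (hmin : ∀ b ∈ Subgroup.closure (cs.simple '' X), ℓ σ ≤ ℓ (σ * b)) {b : W}
    (hb : b ∈ Subgroup.closure (cs.simple '' X)) : ℓ (σ * b) = ℓ σ + ℓ b := by
  have step : ∀ x ∈ Subgroup.closure (cs.simple '' X), ∀ i ∈ X,
      ℓ (σ * x) = ℓ σ + ℓ x → ℓ (σ * (x * s i)) = ℓ σ + ℓ (x * s i) := by
    intro x hx i hi ih
    have hσx := cs.length_mul_simple (σ * x) i
    rw [mul_assoc] at hσx
    rcases cs.length_mul_simple x i with hup | hdown
    · suffices ℓ (σ * (x * s i)) = ℓ (σ * x) + 1 by omega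
      refine hσx.resolve_right fun hdesc => ?_
      -- `s i` is no right inversion of `x`, and `x * s i * x⁻¹ ∈ W_X` none of the minimal `σ`
      rcases cs.isRightInversion_mul (x := σ) (y := x) (t := s i)
          ⟨cs.isReflection_simple i, by rw [mul_assoc]; omega⟩ with hx' | hσ'
      · exact absurd hx'.2 (by omega)
      · have hconj : x * s i * x⁻¹ ∈ Subgroup.closure (cs.simple '' X) :=
          mul_mem (mul_mem hx (Subgroup.subset_closure ⟨i, hi, rfl⟩)) (inv_mem hx)
        exact absurd (hmin _ hconj) (not_le.mpr hσ'.2)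
    · have := cs.length_mul_le σ (x * s i)
      omega
  induction hb using Subgroup.closure_induction_right with
  | one => simp
  | mul_right x hx y hy ih =>
    obtain ⟨i, hi, rfl⟩ := hy
    exact step x hx i hi ih
  | mul_inv_cancel x hx y hy ih =>
    obtain ⟨i, hi, rfl⟩ := hy
    rw [inv_simple]
    exact step x hx i hi ih

theorem exists_isReduced_cons_of_isLeftDescent {w : W} {i : B} (h : cs.IsLeftDescent w i) :
    ∃ κ, cs.IsReduced (i :: κ) ∧ π κ = s i * w ∧ π (i :: κ) = w := by
  obtain ⟨κ, hκ, hκπ⟩ := cs.exists_isReduced (s i * w)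
  have hπ : π (i :: κ) = w := by rw [wordProd_cons, ← hκπ, simple_mul_simple_cancel_left]
  refine ⟨κ, ?_, hκπ.symm, hπ⟩
  rw [isLeftDescent_iff] at h
  rw [IsReduced, hπ, List.length_cons, ← hκ.eq, ← hκπ, h]

def IsBruhatStep (u w : W) : Prop := ∃ t, cs.IsReflection t ∧ w = t * u ∧ ℓ u < ℓ w

open Relation

variable {cs} in
theorem IsBruhatStep.simple_mul {u w : W} (h : cs.IsBruhatStep u w) (i : B) :
    ReflTransGen cs.IsBruhatStep (s i * u) w ∨
      ReflTransGen cs.IsBruhatStep (s i * u) (s i * w) := by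
  obtain ⟨t, ht, rfl, hlt⟩ := h
  rcases cs.length_simple_mul u i with hup | hdown
  swap
  · refine .inl (ReflTransGen.single ⟨s i, cs.isReflection_simple i, ?_, by omega⟩ |>.tail
      ⟨t, ht, rfl, hlt⟩)
    rw [simple_mul_simple_cancel_left]
  by_cases hlen : ℓ (s i * u) < ℓ (s i * (t * u))
  · refine .inr (.single ⟨s i * t * s i, by simpa using ht.conj (s i), ?_, hlen⟩)
    simp [mul_assoc]
  left
  have hdesc : cs.IsLeftDescent (t * u) i := by
    have := cs.length_simple_mul_ne (t * u) i
    unfold IsLeftDescent; omega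
  obtain ⟨κ, hκ, hκπ, hπ⟩ := cs.exists_isReduced_cons_of_isLeftDescent hdesc
  have hmem := cs.mem_leftInvSeq_of_isLeftInversion (ω := i :: κ) (t := t)
    ⟨ht, by rwa [hπ, ← mul_assoc, ht.mul_self, one_mul]⟩
  rw [leftInvSeq, List.mem_cons, List.mem_map] at hmem
  rcases hmem with rfl | ⟨r, hr, rfl⟩
  · exact .refl
  -- `t = s i * r * s i` with `r` a left inversion of `s i * t * u`, which `r` shortens to `s i * u`
  have hr' := (cs.isLeftInversion_of_mem_leftInvSeq (hκ.drop 1) hr).2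
  simp only [List.drop_succ_cons, List.drop_zero, hκπ, MulAut.conj_apply, inv_simple] at hr'
  have hrr := (cs.isReflection_of_mem_leftInvSeq κ hr).mul_self
  have hcancel : r * (s i * (s i * r * s i * u)) = s i * u := by
    simp only [mul_assoc, simple_mul_simple_cancel_left]
    rw [← mul_assoc, hrr, one_mul]
  simp only [MulAut.conj_apply, inv_simple] at hlen
  exact absurd (hcancel ▸ hr') hlen

theorem reflTransGen_isBruhatStep_simple_mul {u w : W} (h : ReflTransGen cs.IsBruhatStep u w)
    (i : B) : ReflTransGen cs.IsBruhatStep (s i * u) w ∨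
      ReflTransGen cs.IsBruhatStep (s i * u) (s i * w) := by
  induction h using ReflTransGen.head_induction_on with
  | refl => exact .inr .refl
  | head hstep hcw ih =>
    rcases hstep.simple_mul i with h | h
    · exact .inl (h.trans hcw)
    · exact ih.imp h.trans h.trans

theorem reflTransGen_isBruhatStep_of_sublist {ω ω' : List B} (hω : cs.IsReduced ω)
    (h : ω'.Sublist ω) : ReflTransGen cs.IsBruhatStep (π ω') (π ω) := by
  induction ω generalizing ω' with
  | nil => rw [List.sublist_nil.mp h]
  | cons i ω ih =>
    have hω₁ : cs.IsReduced ω := by simpa using hω.drop 1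
    have hstep : cs.IsBruhatStep (π ω) (s i * π ω) := by
      refine ⟨s i, cs.isReflection_simple i, rfl, ?_⟩
      have := hω.eq
      rw [wordProd_cons, List.length_cons, ← hω₁.eq] at this
      omega
    rw [wordProd_cons]
    rcases List.sublist_cons_iff.mp h with h | ⟨r, rfl, hr⟩
    · exact (ih hω₁ h).tail hstep
    · rw [wordProd_cons]
      exact (cs.reflTransGen_isBruhatStep_simple_mul (ih hω₁ hr) i).elim (·.tail hstep) id

theorem exists_sublist_of_reflTransGen_isBruhatStep {u v : W}
    (h : ReflTransGen cs.IsBruhatStep u v) {ω : List B} (hω : cs.IsReduced ω) (hv : π ω = v) :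
    ∃ ω', ω'.Sublist ω ∧ π ω' = u := by
  induction h generalizing ω with
  | refl => exact ⟨ω, .refl ω, hv⟩
  | tail _ hstep ih =>
    obtain ⟨t, ht, rfl, hlt⟩ := hstep
    have hcancel : ∀ x, t * (t * x) = x := fun x => by rw [← mul_assoc, ht.mul_self, one_mul]
    obtain ⟨j, -, hj⟩ := cs.exists_eraseIdx_eq_mul_of_isLeftInversion (ω := ω)
      ⟨ht, by rwa [hv, hcancel]⟩
    obtain ⟨κ, hκ, hκred, hκπ⟩ := cs.exists_isReduced_sublist (ω.eraseIdx j)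
    obtain ⟨ω', hω', hπ⟩ := ih hκred (by rw [hκπ, hj, hv, hcancel])
    exact ⟨ω', hω'.trans (hκ.trans (ω.eraseIdx_sublist j)), hπ⟩

end CoxeterSystem

section Bruhat

open CoxeterSystem

variable {cs : CoxeterSystem M W} {u v w x : W} {i : B}

local prefix:100 "s" => cs.simple
local prefix:100 "π" => cs.wordProd
local prefix:100 "ℓ" => cs.length

/-- The subword property: `BruhatLE` asks for a subword in *some* reduced word for `v`, but then
there is one in every reduced word for `v`. -/
theorem BruhatLE.exists_sublist (h : BruhatLE cs u v) {ω : List B} (hω : cs.IsReduced ω)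
    (hv : π ω = v) : ∃ ω', ω'.Sublist ω ∧ π ω' = u := by
  obtain ⟨κ, hκ, rfl, κ', hκ', rfl⟩ := h
  exact cs.exists_sublist_of_reflTransGen_isBruhatStep
    (cs.reflTransGen_isBruhatStep_of_sublist hκ hκ') hω hv

theorem BruhatLE.trans (h₁ : BruhatLE cs u v) (h₂ : BruhatLE cs v w) : BruhatLE cs u w := by
  obtain ⟨ω, hω, rfl, ω₁, hω₁, rfl⟩ := h₂
  obtain ⟨κ, hκ, hκred, hκπ⟩ := cs.exists_isReduced_sublist ω₁
  obtain ⟨ω', hω', hπ⟩ := h₁.exists_sublist hκred hκπ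
  exact ⟨ω, hω, rfl, ω', hω'.trans (hκ.trans hω₁), hπ⟩

theorem BruhatLE.length_le (h : BruhatLE cs u v) : ℓ u ≤ ℓ v := by
  obtain ⟨ω, hω, rfl, ω', hω', rfl⟩ := h
  exact (cs.length_wordProd_le ω').trans (hω'.length_le.trans_eq hω.eq.symm)

theorem bruhatLE_simple_mul_of_isLeftDescent (hx : cs.IsLeftDescent x i) :
    BruhatLE cs (s i * x) x := by
  obtain ⟨κ, hκ, hκπ, hπ⟩ := cs.exists_isReduced_cons_of_isLeftDescent hx
  exact ⟨i :: κ, hκ, hπ, κ, List.sublist_cons_self i κ, hκπ⟩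

theorem bruhatLT_simple_mul_of_isLeftDescent (hx : cs.IsLeftDescent x i) :
    BruhatLT cs (s i * x) x :=
  ⟨bruhatLE_simple_mul_of_isLeftDescent hx, fun h => by
    rw [IsLeftDescent, h] at hx
    exact hx.false⟩

theorem BruhatLE.exists_sublist_cons (h : BruhatLE cs u x) (hx : cs.IsLeftDescent x i) :
    ∃ κ, cs.IsReduced (i :: κ) ∧ π κ = s i * x ∧ π (i :: κ) = x ∧
      ∃ ω', ω'.Sublist κ ∧ (π ω' = u ∨ π ω' = s i * u) := by
  obtain ⟨κ, hκ, hκπ, hxπ⟩ := cs.exists_isReduced_cons_of_isLeftDescent hx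
  obtain ⟨ω', hω', hπ⟩ := h.exists_sublist hκ hxπ
  refine ⟨κ, hκ, hκπ, hxπ, ?_⟩
  rcases List.sublist_cons_iff.mp hω' with hω' | ⟨r, rfl, hr⟩
  · exact ⟨ω', hω', .inl hπ⟩
  · exact ⟨r, hr, .inr (by rw [← hπ, wordProd_cons, simple_mul_simple_cancel_left])⟩

theorem BruhatLE.simple_mul_le (h : BruhatLE cs u x) (hx : cs.IsLeftDescent x i) :
    BruhatLE cs (s i * u) x := by
  obtain ⟨κ, hκ, -, hxπ, ω', hω', hπ | hπ⟩ := h.exists_sublist_cons hx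
  all_goals refine ⟨i :: κ, hκ, hxπ, ?_⟩
  · exact ⟨i :: ω', hω'.cons_cons i, by rw [wordProd_cons, hπ]⟩
  · exact ⟨ω', hω'.cons i, hπ⟩

theorem simple_mul_bruhatLE_iff (hx : cs.IsLeftDescent x i) :
    BruhatLE cs (s i * u) x ↔ BruhatLE cs u x :=
  ⟨fun h => by simpa using h.simple_mul_le hx, (·.simple_mul_le hx)⟩

theorem BruhatLE.le_simple_mul_or_simple_mul_le_simple_mul (h : BruhatLE cs u x)
    (hx : cs.IsLeftDescent x i) : BruhatLE cs u (s i * x) ∨ BruhatLE cs (s i * u) (s i * x) := by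
  obtain ⟨κ, hκ, hκπ, -, ω', hω', hπ | hπ⟩ := h.exists_sublist_cons hx
  · exact .inl ⟨κ, by simpa using hκ.drop 1, hκπ, ω', hω', hπ⟩
  · exact .inr ⟨κ, by simpa using hκ.drop 1, hκπ, ω', hω', hπ⟩

theorem simple_mul_bruhatLE_simple_mul_iff (hx : cs.IsLeftDescent x i)
    (hw : cs.IsLeftDescent w i) : BruhatLE cs (s i * x) (s i * w) ↔ BruhatLE cs x w := by
  refine ⟨fun h => (simple_mul_bruhatLE_iff hw).mp
    (h.trans (bruhatLE_simple_mul_of_isLeftDescent hw)), fun h => ?_⟩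
  exact (h.le_simple_mul_or_simple_mul_le_simple_mul hw).elim
    (bruhatLE_simple_mul_of_isLeftDescent hx).trans id

end Bruhat

section Jset

open CoxeterSystem

variable {cs : CoxeterSystem M W} {W₁ : Subgroup W} {σ : W} {i : B}

theorem mem_lCoset_mul_iff {x g : W} : x ∈ lCoset W₁ (g * σ) ↔ g⁻¹ * x ∈ lCoset W₁ σ := by
  simp only [lCoset, Set.mem_ofPred_eq, inv_mul_eq_iff_eq_mul, mul_assoc]

theorem isLeftDescent_of_mem_lCoset (h₁ : IsStdParabolic cs W₁)
    (hσ : IsBrMin cs (lCoset W₁ σ) σ) (hsσ : BruhatLT cs (cs.simple i * σ) σ) {x : W}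
    (hx : x ∈ lCoset W₁ σ) : cs.IsLeftDescent x i := by
  obtain ⟨X, rfl⟩ := h₁
  obtain ⟨b, hb, rfl⟩ := hx
  have hadd := cs.length_mul_eq_add_of_forall_length_le
    (fun b hb => (hσ.2 _ ⟨b, hb, rfl⟩).length_le) hb
  have hsσ' := lt_of_le_of_ne hsσ.1.length_le (cs.length_simple_mul_ne σ i)
  have := cs.length_mul_le (cs.simple i * σ) b
  rw [IsLeftDescent, ← mul_assoc]
  omega

theorem Jset_eq_of_eq_or_eq_simple_mul (hdesc : ∀ x ∈ lCoset W₁ σ, cs.IsLeftDescent x i)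
    {a b : W} (h : b = a ∨ b = cs.simple i * a) : Jset cs W₁ σ a = Jset cs W₁ σ b := by
  ext x
  refine and_congr_right fun hx => ?_
  rcases h with rfl | rfl
  · rfl
  · exact (simple_mul_bruhatLE_iff (hdesc x hx)).symm

theorem Jset_eq_image_simple_mul (hdesc : ∀ x ∈ lCoset W₁ σ, cs.IsLeftDescent x i) {w m : W}
    (hm : (m = w ∨ m = cs.simple i * w) ∧
      BruhatLE cs m w ∧ BruhatLE cs m (cs.simple i * w)) :
    Jset cs W₁ σ w = (cs.simple i * ·) '' Jset cs W₁ (cs.simple i * σ) m := by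
  rw [Set.image_eq_preimage_of_inverse (fun _ => cs.simple_mul_simple_cancel_left i)
    (fun _ => cs.simple_mul_simple_cancel_left i)]
  ext x
  simp only [Jset, Set.mem_preimage, Set.mem_ofPred_eq, mem_lCoset_mul_iff, inv_simple,
    simple_mul_simple_cancel_left]
  refine and_congr_right fun hx => ⟨fun h => ?_, fun h => ?_⟩
  · exact (h.le_simple_mul_or_simple_mul_le_simple_mul (hdesc x hx)).elim
      hm.2.1.trans hm.2.2.trans
  · have hmx := h.trans (bruhatLE_simple_mul_of_isLeftDescent (hdesc x hx))
    rcases hm.1 with rfl | rfl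
    · exact hmx
    · exact (simple_mul_bruhatLE_iff (hdesc x hx)).mp hmx

theorem isBrMin_image_simple_mul_iff {L : Set W}
    (hL : ∀ v ∈ L, cs.IsLeftDescent (cs.simple i * v) i) {u : W} :
    IsBrMin cs ((cs.simple i * ·) '' L) (cs.simple i * u) ↔ IsBrMin cs L u := by
  rw [IsBrMin, IsBrMin, (mul_right_injective (cs.simple i)).mem_set_image, Set.forall_mem_image]
  refine and_congr_right fun hu => forall₂_congr fun v hv => ?_
  simpa using (simple_mul_bruhatLE_simple_mul_iff (hL u hu) (hL v hv)).symm

end Jset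

/-- Suppose `σ` is the unique minimal element of the coset `σW₁` and `s` is a simple
reflection with `sσ < σ`.  Let `m = w ∧ sw` and `m' = w ∨ sw` be the Bruhat-smaller and
Bruhat-larger of `w` and `sw`.  Then: (1) `sx < x` for every `x ∈ J_{σW₁}(w)`, and
`v < sv` for every `v ∈ J_{sσW₁}(w ∧ sw)`; (2) `J_{σW₁}(w) = s·J_{sσW₁}(w ∧ sw)`, and in
particular `J_{σW₁}(w) = J_{σW₁}(w ∧ sw) = J_{σW₁}(w ∨ sw)`; (3) if either `J_{σW₁}(w)`
or `J_{sσW₁}(w ∧ sw)` has a unique minimal element `u`, then so does the other, and `su`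
is that unique minimal element. -/
theorem stmt_11 (cs : CoxeterSystem M W) (W₁ : Subgroup W)
    (h₁ : IsStdParabolic cs W₁) (σ w : W) (i : B)
    (hσ : IsBrMin cs (lCoset W₁ σ) σ)
    (hsσ : BruhatLT cs (cs.simple i * σ) σ)
    (m m' : W)
    (hm : (m = w ∨ m = cs.simple i * w) ∧
      BruhatLE cs m w ∧ BruhatLE cs m (cs.simple i * w))
    (hm' : (m' = w ∨ m' = cs.simple i * w) ∧
      BruhatLE cs w m' ∧ BruhatLE cs (cs.simple i * w) m') :
    (∀ x ∈ Jset cs W₁ σ w, BruhatLT cs (cs.simple i * x) x) ∧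
    (∀ v ∈ Jset cs W₁ (cs.simple i * σ) m, BruhatLT cs v (cs.simple i * v)) ∧
    (Jset cs W₁ σ w = (fun x => cs.simple i * x) '' Jset cs W₁ (cs.simple i * σ) m) ∧
    (Jset cs W₁ σ w = Jset cs W₁ σ m ∧ Jset cs W₁ σ w = Jset cs W₁ σ m') ∧
    (∀ u : W,
      (IsBrMin cs (Jset cs W₁ σ w) u →
        IsBrMin cs (Jset cs W₁ (cs.simple i * σ) m) (cs.simple i * u)) ∧
      (IsBrMin cs (Jset cs W₁ (cs.simple i * σ) m) u →
        IsBrMin cs (Jset cs W₁ σ w) (cs.simple i * u))) := by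
  have hdesc : ∀ x ∈ lCoset W₁ σ, cs.IsLeftDescent x i :=
    fun x hx => isLeftDescent_of_mem_lCoset h₁ hσ hsσ hx
  have hdesc' : ∀ v ∈ Jset cs W₁ (cs.simple i * σ) m, cs.IsLeftDescent (cs.simple i * v) i :=
    fun v hv => hdesc _ (by simpa [mem_lCoset_mul_iff] using hv.1)
  have himage := Jset_eq_image_simple_mul hdesc hm
  refine ⟨fun x hx => bruhatLT_simple_mul_of_isLeftDescent (hdesc x hx.1),
    fun v hv => by simpa using bruhatLT_simple_mul_of_isLeftDescent (hdesc' v hv), himage,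
    ⟨Jset_eq_of_eq_or_eq_simple_mul hdesc hm.1, Jset_eq_of_eq_or_eq_simple_mul hdesc hm'.1⟩,
    fun u => ⟨fun hu => ?_, fun hu => ?_⟩⟩
  · rw [himage, ← cs.simple_mul_simple_cancel_left i (w := u)] at hu
    exact (isBrMin_image_simple_mul_iff hdesc').mp hu
  · rw [himage]
    exact (isBrMin_image_simple_mul_iff hdesc').mpr hu
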